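/- arXiv:1903.08931 — 3 statements merged into one kernel-verified Lean document; each statement's English description precedes it below -/
import Mathlib

section
/- Let n be a positive integer. Let φ₁, φ₂ be continuous linear functionals on M_n(ℂ) and let e₁, e₂ ∈ M_n(ℂ) be partial isometries with φ₁(e₁) = ‖φ₁‖ and φ₂(e₂) = ‖φ₂‖ (equality in ℂ, the right-hand sides being real). Then there exist a continuous linear functional ψ on M_n(ℂ) with ‖ψ‖ = 1 and a partial isometry e ∈ M_n(ℂ) with ψ(e) = 1 such that for all x ∈ M_n(ℂ): Re φ₁((x xᴴ e₁ + e₁ xᴴ x)/2) + Re φ₂((x xᴴ e₂ + e₂ xᴴ x)/2) ≤ 2 (‖φ₁‖ + ‖φ₂‖) · Re ψ((x xᴴ e + e xᴴ x)/2). -/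
/-!
Take `e = 1` and `ψ = (2(‖φ₁‖ + ‖φ₂‖))⁻¹ (Φ₁ + Φ₂)`, where `Φⱼ x = φⱼ (eⱼ x + x eⱼ)`; then `‖ψ‖ ≤ 1`
because `‖eⱼ‖ ≤ 1`, and `ψ 1 = 1` because `φⱼ eⱼ = ‖φⱼ‖`. Expanding `Φⱼ (x x⋆ + x⋆ x)` shows that
`2(‖φ₁‖ + ‖φ₂‖)‖x‖²_ψ` exceeds `‖x‖²_{φ₁} + ‖x‖²_{φ₂}` by half the real parts of
`φⱼ (eⱼ x x⋆ + x⋆ x eⱼ)`, and these are nonnegative: for `a ≥ 0` and small `t > 0` the element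
`eⱼ - t eⱼ a = eⱼ (1 - t a)` lies in the unit ball, so `Re φⱼ (eⱼ - t eⱼ a) ≤ ‖φⱼ‖ = φⱼ eⱼ`.
-/

lemma norm_le_one_of_mul_star_mul_self {E : Type*} [NonUnitalNormedRing E] [StarRing E]
    [CStarRing E] {e : E} (he : e * star e * e = e) : ‖e‖ ≤ 1 := by
  have hp : IsStarProjection (star e * e) :=
    ⟨by rw [IsIdempotentElem, mul_assoc, ← mul_assoc e, he], by simp [IsSelfAdjoint]⟩
  have := hp.norm_le
  rw [CStarRing.norm_star_mul_self] at this
  nlinarith [norm_nonneg e]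

lemma re_apply_nonneg_of_norm_sub_smul_le {E : Type*} [NormedAddCommGroup E] [NormedSpace ℂ E]
    {φ : E →L[ℂ] ℂ} {e c : E} (hφ : φ e = (‖φ‖ : ℂ)) {t : ℝ} (ht : 0 < t)
    (hc : ‖e - t • c‖ ≤ 1) : 0 ≤ (φ c).re := by
  have key : (φ (e - t • c)).re ≤ ‖φ‖ :=
    calc (φ (e - t • c)).re ≤ ‖φ (e - t • c)‖ := Complex.re_le_norm _
      _ ≤ ‖φ‖ * ‖e - t • c‖ := φ.le_opNorm _
      _ ≤ ‖φ‖ := mul_le_of_le_one_right (norm_nonneg φ) hc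
  rw [map_sub, φ.map_smul_of_tower, hφ, Complex.sub_re, Complex.ofReal_re, Complex.real_smul,
    Complex.re_ofReal_mul] at key
  nlinarith

namespace CStarAlgebra

variable {A : Type*} [CStarAlgebra A]

noncomputable def tripleSeminormSq (φ : A →L[ℂ] ℂ) (e x : A) : ℝ :=
  (φ (x * star x * e + e * star x * x) / 2).re

noncomputable def anticommutatorFunctional (φ : A →L[ℂ] ℂ) (e : A) : A →L[ℂ] ℂ :=
  φ ∘L (ContinuousLinearMap.mul ℂ A e + (ContinuousLinearMap.mul ℂ A).flip e)

@[simp]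
lemma anticommutatorFunctional_apply (φ : A →L[ℂ] ℂ) (e x : A) :
    anticommutatorFunctional φ e x = φ (e * x + x * e) :=
  rfl

lemma anticommutatorFunctional_apply_one (φ : A →L[ℂ] ℂ) (e : A) :
    anticommutatorFunctional φ e 1 = 2 * φ e := by
  rw [anticommutatorFunctional_apply, mul_one, one_mul, ← two_smul ℂ e, map_smul, smul_eq_mul]

lemma norm_anticommutatorFunctional_le (φ : A →L[ℂ] ℂ) {e : A} (he : ‖e‖ ≤ 1) :
    ‖anticommutatorFunctional φ e‖ ≤ 2 * ‖φ‖ := by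
  refine ContinuousLinearMap.opNorm_le_bound _ (by positivity) fun x ↦ ?_
  calc ‖φ (e * x + x * e)‖ ≤ ‖φ‖ * ‖e * x + x * e‖ := φ.le_opNorm _
    _ ≤ ‖φ‖ * (2 * ‖x‖) := by
      gcongr
      calc ‖e * x + x * e‖ ≤ ‖e‖ * ‖x‖ + ‖x‖ * ‖e‖ :=
            (norm_add_le _ _).trans (add_le_add (norm_mul_le _ _) (norm_mul_le _ _))
        _ ≤ 2 * ‖x‖ := by nlinarith [norm_nonneg x]
    _ = 2 * ‖φ‖ * ‖x‖ := by ring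

section Order

variable [PartialOrder A] [StarOrderedRing A]

lemma norm_one_sub_le_one {a : A} (ha : 0 ≤ a) (ha' : ‖a‖ ≤ 1) : ‖1 - a‖ ≤ 1 :=
  (mem_Icc_iff_norm_le_one.1
    ⟨sub_nonneg.2 ((norm_le_one_iff_of_nonneg a).1 ha'), sub_le_self _ ha⟩).2

lemma exists_pos_norm_one_sub_smul_le_one {a : A} (ha : 0 ≤ a) :
    ∃ t : ℝ, 0 < t ∧ ‖1 - t • a‖ ≤ 1 := by
  refine ⟨(‖a‖ + 1)⁻¹, by positivity, norm_one_sub_le_one (smul_nonneg (by positivity) ha) ?_⟩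
  rw [norm_smul, Real.norm_of_nonneg (by positivity), inv_mul_le_one₀ (by positivity)]
  linarith

lemma re_apply_mul_nonneg_of_nonneg_right {φ : A →L[ℂ] ℂ} {e a : A} (he : ‖e‖ ≤ 1)
    (hφ : φ e = (‖φ‖ : ℂ)) (ha : 0 ≤ a) : 0 ≤ (φ (e * a)).re := by
  obtain ⟨t, ht, hta⟩ := exists_pos_norm_one_sub_smul_le_one ha
  refine re_apply_nonneg_of_norm_sub_smul_le hφ ht ?_
  calc ‖e - t • (e * a)‖ = ‖e * (1 - t • a)‖ := by rw [mul_sub, mul_one, mul_smul_comm]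
    _ ≤ ‖e‖ * ‖1 - t • a‖ := norm_mul_le _ _
    _ ≤ 1 := mul_le_one₀ he (norm_nonneg _) hta

lemma re_apply_mul_nonneg_of_nonneg_left {φ : A →L[ℂ] ℂ} {e a : A} (he : ‖e‖ ≤ 1)
    (hφ : φ e = (‖φ‖ : ℂ)) (ha : 0 ≤ a) : 0 ≤ (φ (a * e)).re := by
  obtain ⟨t, ht, hta⟩ := exists_pos_norm_one_sub_smul_le_one ha
  refine re_apply_nonneg_of_norm_sub_smul_le hφ ht ?_
  calc ‖e - t • (a * e)‖ = ‖(1 - t • a) * e‖ := by rw [sub_mul, one_mul, smul_mul_assoc]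
    _ ≤ ‖1 - t • a‖ * ‖e‖ := norm_mul_le _ _
    _ ≤ 1 := mul_le_one₀ hta (norm_nonneg _) he

lemma tripleSeminormSq_le_re_anticommutatorFunctional {φ : A →L[ℂ] ℂ} {e : A} (he : ‖e‖ ≤ 1)
    (hφ : φ e = (‖φ‖ : ℂ)) (x : A) :
    tripleSeminormSq φ e x ≤ (anticommutatorFunctional φ e (x * star x + star x * x) / 2).re := by
  have h₁ := re_apply_mul_nonneg_of_nonneg_right he hφ (mul_star_self_nonneg x)
  have h₂ := re_apply_mul_nonneg_of_nonneg_left he hφ (star_mul_self_nonneg x)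
  have hsplit : e * (x * star x + star x * x) + (x * star x + star x * x) * e =
      (x * star x * e + e * star x * x) + (e * (x * star x) + star x * x * e) := by
    noncomm_ring
  rw [tripleSeminormSq, anticommutatorFunctional_apply, hsplit]
  simp only [map_add, Complex.add_re, Complex.div_ofNat_re]
  linarith

end Order

theorem exists_tripleSeminormSq_add_le [Nontrivial A] {φ₁ φ₂ : A →L[ℂ] ℂ} {e₁ e₂ : A}
    (he₁ : ‖e₁‖ ≤ 1) (he₂ : ‖e₂‖ ≤ 1) (hφ₁ : φ₁ e₁ = (‖φ₁‖ : ℂ)) (hφ₂ : φ₂ e₂ = (‖φ₂‖ : ℂ)) :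
    ∃ ψ : A →L[ℂ] ℂ, ‖ψ‖ = 1 ∧ ψ 1 = 1 ∧ ∀ x : A,
      tripleSeminormSq φ₁ e₁ x + tripleSeminormSq φ₂ e₂ x ≤
        2 * (‖φ₁‖ + ‖φ₂‖) * tripleSeminormSq ψ 1 x := by
  let := spectralOrder A
  let := spectralOrderedRing A
  rcases (add_nonneg (norm_nonneg φ₁) (norm_nonneg φ₂)).eq_or_lt with hS | hS
  · obtain ⟨ψ, hψ, hψ1⟩ := exists_dual_vector' ℂ (1 : A)
    have h₁ : φ₁ = 0 := norm_eq_zero.1 (by linarith [norm_nonneg φ₁, norm_nonneg φ₂])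
    have h₂ : φ₂ = 0 := norm_eq_zero.1 (by linarith [norm_nonneg φ₁, norm_nonneg φ₂])
    refine ⟨ψ, hψ, by simpa using hψ1, fun x ↦ ?_⟩
    simp [h₁, h₂, tripleSeminormSq]
  set ψ := (2 * (‖φ₁‖ + ‖φ₂‖))⁻¹ • (anticommutatorFunctional φ₁ e₁ + anticommutatorFunctional φ₂ e₂)
  have hψ_apply (y : A) : ψ y = ((2 * (‖φ₁‖ + ‖φ₂‖))⁻¹ : ℝ) *
      (anticommutatorFunctional φ₁ e₁ y + anticommutatorFunctional φ₂ e₂ y) := rfl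
  have hnormalize : (2 * (‖φ₁‖ + ‖φ₂‖))⁻¹ * (2 * ‖φ₁‖ + 2 * ‖φ₂‖) = 1 := by field_simp
  have hψ1 : ψ 1 = 1 := by
    rw [hψ_apply, anticommutatorFunctional_apply_one, anticommutatorFunctional_apply_one, hφ₁, hφ₂]
    exact_mod_cast hnormalize
  have hψ : ‖ψ‖ ≤ 1 :=
    calc ‖ψ‖ ≤ (2 * (‖φ₁‖ + ‖φ₂‖))⁻¹ * (2 * ‖φ₁‖ + 2 * ‖φ₂‖) := by
          rw [norm_smul, Real.norm_of_nonneg (by positivity)]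
          gcongr
          exact (norm_add_le _ _).trans (add_le_add (norm_anticommutatorFunctional_le φ₁ he₁)
            (norm_anticommutatorFunctional_le φ₂ he₂))
      _ = 1 := hnormalize
  refine ⟨ψ, le_antisymm hψ (by simpa [hψ1] using ψ.le_opNorm 1), hψ1, fun x ↦ ?_⟩
  have hψx : 2 * (‖φ₁‖ + ‖φ₂‖) * tripleSeminormSq ψ 1 x =
      (anticommutatorFunctional φ₁ e₁ (x * star x + star x * x) / 2).re +
        (anticommutatorFunctional φ₂ e₂ (x * star x + star x * x) / 2).re := by
    rw [tripleSeminormSq, mul_one, one_mul, hψ_apply]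
    simp only [Complex.div_ofNat_re, Complex.add_re, Complex.re_ofReal_mul]
    field_simp
  rw [hψx]
  exact add_le_add (tripleSeminormSq_le_re_anticommutatorFunctional he₁ hφ₁ x)
    (tripleSeminormSq_le_re_anticommutatorFunctional he₂ hφ₂ x)

end CStarAlgebra

open scoped Matrix.Norms.L2Operator
open Matrix

/-- The seminorm-domination theorem for the matrix algebra `M_n(ℂ)`: for any two
functionals `φ₁, φ₂` with norm-attaining partial isometries `e₁, e₂` (so that
`Re φⱼ((x xᴴ eⱼ + eⱼ xᴴ x)/2) = ‖x‖²_{φⱼ}`), there exist a norm-one functional `ψ` and a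
partial isometry `e` with `ψ e = 1` such that
`‖x‖²_{φ₁} + ‖x‖²_{φ₂} ≤ 2(‖φ₁‖+‖φ₂‖)‖x‖²_ψ` for all `x`. -/
theorem seminorm_domination_matrix (n : ℕ) (hn : 0 < n)
    (φ₁ φ₂ : Matrix (Fin n) (Fin n) ℂ →L[ℂ] ℂ)
    (e₁ e₂ : Matrix (Fin n) (Fin n) ℂ)
    (he₁ : e₁ * e₁ᴴ * e₁ = e₁) (he₂ : e₂ * e₂ᴴ * e₂ = e₂)
    (hφ₁ : φ₁ e₁ = (‖φ₁‖ : ℂ)) (hφ₂ : φ₂ e₂ = (‖φ₂‖ : ℂ)) :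
    ∃ (ψ : Matrix (Fin n) (Fin n) ℂ →L[ℂ] ℂ) (e : Matrix (Fin n) (Fin n) ℂ),
      ‖ψ‖ = 1 ∧ e * eᴴ * e = e ∧ ψ e = 1 ∧
      ∀ x : Matrix (Fin n) (Fin n) ℂ,
        ((φ₁ (x * xᴴ * e₁ + e₁ * xᴴ * x)) / 2).re +
          ((φ₂ (x * xᴴ * e₂ + e₂ * xᴴ * x)) / 2).re ≤
        2 * (‖φ₁‖ + ‖φ₂‖) * ((ψ (x * xᴴ * e + e * xᴴ * x)) / 2).re := by
  have : Nonempty (Fin n) := Fin.pos_iff_nonempty.1 hn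
  obtain ⟨ψ, hψ, hψ1, hdom⟩ := CStarAlgebra.exists_tripleSeminormSq_add_le
    (norm_le_one_of_mul_star_mul_self he₁) (norm_le_one_of_mul_star_mul_self he₂) hφ₁ hφ₂
  exact ⟨ψ, 1, hψ, by simp, hψ1, hdom⟩
end

section
/- Let n be a positive integer, 0 ≤ k ≤ n, and let r ∈ M_n(ℂ) be a fixed projection of rank k. Then there exists a Borel measurable map υ : M_n(ℂ) → M_n(ℂ) such that for every projection q ∈ M_n(ℂ) of rank k, υ(q) is a unitary matrix and r = υ(q)ᴴ q υ(q). -/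
open Matrix

/-- The Borel σ-algebra on `M_n(ℂ)` coming from its (norm) topology. -/
noncomputable instance matrixMeasurableSpace (n : ℕ) : MeasurableSpace (Matrix (Fin n) (Fin n) ℂ) :=
  borel _

instance matrixBorelSpace (n : ℕ) : BorelSpace (Matrix (Fin n) (Fin n) ℂ) := ⟨rfl⟩

/-! A unitary conjugating `r` to `q` exists because both are diagonalised by unitaries with
eigenvalues in `{0, 1}`, exactly `k` of them equal to `1`, and a permutation matrix matches the two
diagonals. To choose it measurably, note that `u ↦ u r uᴴ` is continuous on the compact unitary
group, so the unitaries sending `r` to `q` form a closed set and, for closed `C`, the set of `q`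
reached from `C` is compact. For such closed-valued maps a Borel selection is built as in the
Kuratowski–Ryll-Nardzewski theorem: along a dense sequence, pick the least-indexed centre of a ball
of radius `2⁻¹ ^ j` meeting the fibre inside the previous ball, and pass to the limit. -/

open Metric Filter Topology

theorem Equiv.Perm.exists_forall_iff_of_card_eq {α : Type*} [Fintype α] {p q : α → Prop}
    [DecidablePred p] [DecidablePred q] (h : Fintype.card {x // q x} = Fintype.card {x // p x}) :
    ∃ σ : Equiv.Perm α, ∀ x, p (σ x) ↔ q x := by
  let e := Fintype.equivOfCardEq h
  exact ⟨e.extendSubtype, fun x =>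
    ⟨fun hx => by_contra fun hq => e.extendSubtype_not_mem x hq hx, e.extendSubtype_mem x⟩⟩

theorem measurable_dite_find {α : Type*} [MeasurableSpace α] {p : ℕ → α → Prop}
    [∀ a, DecidablePred (p · a)] [∀ a, Decidable (∃ m, p m a)]
    (hp : ∀ m, MeasurableSet {a | p m a}) {g : α → ℕ} (hg : Measurable g) :
    Measurable fun a => if h : ∃ m, p m a then Nat.find h else g a := by
  have hs : MeasurableSet {a | ∃ m, p m a} := by
    simpa only [Set.ofPred_exists] using MeasurableSet.iUnion hp
  refine Measurable.dite (f := fun a => Nat.find a.2) ?_ (hg.comp measurable_subtype_coe) hs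
  exact measurable_find (p := fun (a : {a | ∃ m, p m a}) m => p m a) _
    fun m => measurable_subtype_coe (hp m)

section Selection

open scoped Classical

variable {α β : Type*} [MetricSpace β] (F : α → Set β) (D : ℕ → β)

/-- If no index qualifies (which only happens when `F a = ∅`), the previous one is kept, so that
the centres `D (selectionIndex F D j a)` converge for every `a`. -/
noncomputable def selectionIndex : ℕ → α → ℕ
  | 0, a => if h : ∃ m, (F a ∩ closedBall (D m) 1).Nonempty then Nat.find h else 0
  | j + 1, a =>
    if h : ∃ m, (F a ∩ closedBall (D (selectionIndex j a)) (2⁻¹ ^ j) ∩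
        closedBall (D m) (2⁻¹ ^ (j + 1))).Nonempty then Nat.find h else selectionIndex j a

variable {F D}

theorem measurable_selectionIndex [MeasurableSpace α]
    (hF : ∀ C, IsClosed C → MeasurableSet {a | (F a ∩ C).Nonempty}) (j : ℕ) :
    Measurable (selectionIndex F D j) := by
  induction j with
  | zero => exact measurable_dite_find (fun m => hF _ isClosed_closedBall) measurable_const
  | succ j ih =>
    refine measurable_dite_find (fun m => ?_) ih
    have hsplit : {a | (F a ∩ closedBall (D (selectionIndex F D j a)) (2⁻¹ ^ j) ∩
        closedBall (D m) (2⁻¹ ^ (j + 1))).Nonempty} = ⋃ s, selectionIndex F D j ⁻¹' {s} ∩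
        {a | (F a ∩ (closedBall (D s) (2⁻¹ ^ j) ∩ closedBall (D m) (2⁻¹ ^ (j + 1)))).Nonempty} := by
      ext a
      simp [Set.inter_assoc]
    rw [hsplit]
    exact .iUnion fun s => (ih (measurableSet_singleton s)).inter
      (hF _ (isClosed_closedBall.inter isClosed_closedBall))

theorem dist_selectionIndex_succ_le (j : ℕ) (a : α) :
    dist (D (selectionIndex F D j a)) (D (selectionIndex F D (j + 1) a)) ≤ 2 * 2⁻¹ ^ j := by
  rw [selectionIndex]
  split_ifs with h
  · obtain ⟨x, ⟨_, hx⟩, hx'⟩ := Nat.find_spec h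
    calc _ ≤ dist (D (selectionIndex F D j a)) x + dist x (D (Nat.find h)) := dist_triangle _ _ _
      _ ≤ 2⁻¹ ^ j + 2⁻¹ ^ (j + 1) := add_le_add (mem_closedBall'.mp hx) (mem_closedBall.mp hx')
      _ ≤ 2 * 2⁻¹ ^ j := by rw [pow_succ]; linarith [pow_nonneg (by norm_num : (0 : ℝ) ≤ 2⁻¹) j]
  · simp

theorem inter_closedBall_selectionIndex_nonempty (hD : DenseRange D) {a : α}
    (ha : (F a).Nonempty) (j : ℕ) :
    (F a ∩ closedBall (D (selectionIndex F D j a)) (2⁻¹ ^ j)).Nonempty := by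
  induction j with
  | zero =>
    obtain ⟨x, hx⟩ := ha
    obtain ⟨m, hm⟩ := denseRange_iff.mp hD x 1 one_pos
    have h : ∃ m, (F a ∩ closedBall (D m) 1).Nonempty := ⟨m, x, hx, mem_closedBall.mpr hm.le⟩
    simpa [selectionIndex, h] using Nat.find_spec h
  | succ j ih =>
    obtain ⟨x, hx⟩ := ih
    obtain ⟨m, hm⟩ := denseRange_iff.mp hD x (2⁻¹ ^ (j + 1)) (by positivity)
    have h : ∃ m, (F a ∩ closedBall (D (selectionIndex F D j a)) (2⁻¹ ^ j) ∩
        closedBall (D m) (2⁻¹ ^ (j + 1))).Nonempty := ⟨m, x, hx, mem_closedBall.mpr hm.le⟩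
    obtain ⟨y, ⟨hy, _⟩, hy'⟩ := Nat.find_spec h
    rw [selectionIndex, dif_pos h]
    exact ⟨y, hy, hy'⟩

theorem exists_measurable_selection [MeasurableSpace α] [CompleteSpace β]
    [SecondCountableTopology β] [MeasurableSpace β] [BorelSpace β] [Nonempty β]
    (hF : ∀ a, IsClosed (F a)) (hF' : ∀ C, IsClosed C → MeasurableSet {a | (F a ∩ C).Nonempty}) :
    ∃ g : α → β, Measurable g ∧ ∀ a, (F a).Nonempty → g a ∈ F a := by
  obtain ⟨D, hD⟩ := TopologicalSpace.exists_dense_seq β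
  have hlim : ∀ a, Tendsto (fun j => D (selectionIndex F D j a)) atTop
      (𝓝 (limUnder atTop fun j => D (selectionIndex F D j a))) := fun a =>
    (cauchySeq_of_le_geometric 2⁻¹ 2 (by norm_num)
      (dist_selectionIndex_succ_le · a)).tendsto_limUnder
  refine ⟨_, measurable_of_tendsto_metrizable
    (fun j => measurable_from_nat.comp (measurable_selectionIndex hF' j))
    (tendsto_pi_nhds.mpr hlim), fun a ha => ?_⟩
  have hinfDist : ∀ j, infDist (D (selectionIndex F D j a)) (F a) ≤ 2⁻¹ ^ j := fun j => by
    obtain ⟨x, hx, hx'⟩ := inter_closedBall_selectionIndex_nonempty hD ha j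
    exact (infDist_le_dist_of_mem hx).trans (mem_closedBall'.mp hx')
  rw [(hF a).mem_iff_infDist_zero ha]
  refine le_antisymm (le_of_tendsto_of_tendsto
    ((continuous_infDist_pt _).tendsto _ |>.comp (hlim a))
    (tendsto_pow_atTop_nhds_zero_of_lt_one (by norm_num) (by norm_num))
    (Eventually.of_forall hinfDist)) infDist_nonneg

end Selection

theorem IsCompact.exists_measurable_section {β γ : Type*} [TopologicalSpace β] [PolishSpace β]
    [MeasurableSpace β] [BorelSpace β] [Nonempty β] [TopologicalSpace γ] [T2Space γ]
    [MeasurableSpace γ] [OpensMeasurableSpace γ] {K : Set β} (hK : IsCompact K) {φ : β → γ}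
    (hφ : ContinuousOn φ K) :
    ∃ g : γ → β, Measurable g ∧ ∀ y ∈ φ '' K, g y ∈ K ∧ φ (g y) = y := by
  let := TopologicalSpace.upgradeIsCompletelyMetrizable β
  have hhit : ∀ C, IsClosed C → MeasurableSet {y | (K ∩ φ ⁻¹' {y} ∩ C).Nonempty} :=
    fun C hC => by
      have himage : {y | (K ∩ φ ⁻¹' {y} ∩ C).Nonempty} = φ '' (K ∩ C) := by
        ext y
        simp [Set.Nonempty, and_right_comm]
      rw [himage]
      exact ((hK.inter_right hC).image_of_continuousOn
        (hφ.mono Set.inter_subset_left)).isClosed.measurableSet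
  obtain ⟨g, hg, hgK⟩ := exists_measurable_selection
    (fun y => hφ.preimage_isClosed_of_isClosed hK.isClosed isClosed_singleton) hhit
  refine ⟨g, hg, fun y hy => hgK y ?_⟩
  obtain ⟨x, hx, rfl⟩ := hy
  exact ⟨x, hx, rfl⟩

namespace Matrix

instance instPolishSpace {m n α : Type*} [Countable m] [Countable n] [TopologicalSpace α]
    [PolishSpace α] : PolishSpace (Matrix m n α) :=
  inferInstanceAs (PolishSpace (m → n → α))

section Permutation

variable {n R : Type*} [Fintype n] [DecidableEq n] [CommRing R] [StarRing R]

theorem permMatrix_mul_diagonal_mul_star (σ : Equiv.Perm n) (d : n → R) :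
    σ.permMatrix R * diagonal d * star (σ.permMatrix R) = diagonal (d ∘ σ) := by
  rw [star_eq_conjTranspose, conjTranspose_permMatrix, PEquiv.toMatrix_toPEquiv_mul,
    PEquiv.mul_toMatrix_toPEquiv, submatrix_submatrix]
  exact submatrix_diagonal_equiv d σ

theorem permMatrix_mem_unitaryGroup (σ : Equiv.Perm n) : σ.permMatrix R ∈ unitaryGroup n R := by
  rw [mem_unitaryGroup_iff, star_eq_conjTranspose, conjTranspose_permMatrix, ← permMatrix_mul,
    inv_mul_cancel, permMatrix_one]

end Permutation

variable {n 𝕜 : Type*} [Fintype n] [DecidableEq n] [RCLike 𝕜]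

theorem isCompact_unitaryGroup : IsCompact (unitaryGroup n 𝕜 : Set (Matrix n n 𝕜)) := by
  refine IsCompact.of_isClosed_subset (isCompact_univ_pi fun _ => isCompact_univ_pi fun _ =>
    isCompact_closedBall (0 : 𝕜) 1) (isClosed_unitary (R := Matrix n n 𝕜)) fun U hU i _ j _ => ?_
  simpa using entry_norm_bound_of_unitary hU i j

namespace IsHermitian

variable {A B : Matrix n n 𝕜}

theorem eigenvalues_eq_zero_or_one (hA : A.IsHermitian) (hA' : IsIdempotentElem A) (i : n) :
    hA.eigenvalues i = 0 ∨ hA.eigenvalues i = 1 :=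
  hA'.spectrum_subset ℝ (hA.eigenvalues_mem_spectrum_real i)

theorem exists_perm_eigenvalues_comp_eq (hA : A.IsHermitian) (hA' : IsIdempotentElem A)
    (hB : B.IsHermitian) (hB' : IsIdempotentElem B) (h : A.rank = B.rank) :
    ∃ σ : Equiv.Perm n, hA.eigenvalues ∘ σ = hB.eigenvalues := by
  classical
  obtain ⟨σ, hσ⟩ := Equiv.Perm.exists_forall_iff_of_card_eq
    (p := fun i => hA.eigenvalues i ≠ 0) (q := fun i => hB.eigenvalues i ≠ 0)
    (by rw [← hA.rank_eq_card_non_zero_eigs, ← hB.rank_eq_card_non_zero_eigs, h])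
  refine ⟨σ, funext fun i => ?_⟩
  have := hσ i
  rcases hA.eigenvalues_eq_zero_or_one hA' (σ i) with h1 | h1 <;>
    rcases hB.eigenvalues_eq_zero_or_one hB' i with h2 | h2 <;> simp_all

end IsHermitian

open Unitary in
theorem exists_mem_unitaryGroup_mul_mul_star_eq {p q : Matrix n n 𝕜} (hp : IsStarProjection p)
    (hq : IsStarProjection q) (h : p.rank = q.rank) :
    ∃ u ∈ unitaryGroup n 𝕜, u * p * star u = q := by
  have hp' : p.IsHermitian := hp.isSelfAdjoint
  have hq' : q.IsHermitian := hq.isSelfAdjoint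
  obtain ⟨σ, hσ⟩ := hp'.exists_perm_eigenvalues_comp_eq hp.isIdempotentElem hq'
    hq.isIdempotentElem h
  let P : unitaryGroup n 𝕜 := ⟨σ.permMatrix 𝕜, permMatrix_mem_unitaryGroup σ⟩
  have hP : conjStarAlgAut 𝕜 _ P (diagonal (RCLike.ofReal ∘ hp'.eigenvalues)) =
      diagonal (RCLike.ofReal ∘ hq'.eigenvalues) := by
    rw [conjStarAlgAut_apply, ← hσ]
    exact permMatrix_mul_diagonal_mul_star σ _
  set u := hq'.eigenvectorUnitary * P * star hp'.eigenvectorUnitary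
  refine ⟨u, u.2, ?_⟩
  change conjStarAlgAut 𝕜 _ u p = q
  rw [conjStarAlgAut_mul_apply, conjStarAlgAut_mul_apply,
    hp'.conjStarAlgAut_star_eigenvectorUnitary, hP, ← hq'.spectral_theorem]

end Matrix

theorem measurable_unitary_conjugation_of_projections_general (n k : ℕ)
    (r : Matrix (Fin n) (Fin n) ℂ) (hr : r * r = r) (hr' : rᴴ = r) (hrank : r.rank = k) :
    ∃ υ : Matrix (Fin n) (Fin n) ℂ → Matrix (Fin n) (Fin n) ℂ,
      Measurable υ ∧
      ∀ q : Matrix (Fin n) (Fin n) ℂ, q * q = q → qᴴ = q → q.rank = k →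
        (υ q)ᴴ * υ q = 1 ∧ υ q * (υ q)ᴴ = 1 ∧ r = (υ q)ᴴ * q * υ q := by
  obtain ⟨υ, hυ, hυK⟩ := isCompact_unitaryGroup.exists_measurable_section
    (φ := fun u : Matrix (Fin n) (Fin n) ℂ => u * r * star u)
    (by fun_prop : Continuous _).continuousOn
  refine ⟨υ, hυ, fun q hq hq' hqrank => ?_⟩
  obtain ⟨⟨hυq, hυq'⟩, hconj⟩ := hυK q (exists_mem_unitaryGroup_mul_mul_star_eq ⟨hr, hr'⟩ ⟨hq, hq'⟩
    (hrank.trans hqrank.symm))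
  rw [star_eq_conjTranspose] at hυq hυq' hconj
  refine ⟨hυq, hυq', ?_⟩
  calc r = ((υ q)ᴴ * υ q) * r * ((υ q)ᴴ * υ q) := by rw [hυq, one_mul, mul_one]
    _ = (υ q)ᴴ * (υ q * r * (υ q)ᴴ) * υ q := by simp only [mul_assoc]
    _ = (υ q)ᴴ * q * υ q := by rw [hconj]

/-- Borel measurable choice of unitaries conjugating each rank-`k` projection onto a fixed
rank-`k` projection `r`. -/
theorem measurable_unitary_conjugation_of_projections (n k : ℕ) (hk : k ≤ n)
    (r : Matrix (Fin n) (Fin n) ℂ) (hr : r * r = r) (hr' : rᴴ = r) (hrank : r.rank = k) :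
    ∃ υ : Matrix (Fin n) (Fin n) ℂ → Matrix (Fin n) (Fin n) ℂ,
      Measurable υ ∧
      ∀ q : Matrix (Fin n) (Fin n) ℂ, q * q = q → qᴴ = q → q.rank = k →
        (υ q)ᴴ * υ q = 1 ∧ υ q * (υ q)ᴴ = 1 ∧ r = (υ q)ᴴ * q * υ q :=
  measurable_unitary_conjugation_of_projections_general n k r hr hr' hrank
end

section
/- Let (Ω, Σ) be a measurable space, n a positive integer, and f : Ω → M_n(ℂ) a measurable map such that f(ω) is a projection for every ω ∈ Ω. For each k ∈ {0, 1, …, n} let r_k ∈ M_n(ℂ) be a fixed projection of rank k (with r₀ = 0 and r_n = 1). Then there exists a measurable map u : Ω → M_n(ℂ) such that u(ω) is unitary for every ω ∈ Ω and u(ω)ᴴ f(ω) u(ω) = r_{rank f(ω)} for every ω ∈ Ω; in particular u(ω)ᴴ f(ω) u(ω) ∈ {0, r₁, …, r_{n−1}, 1} for all ω. -/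
open Matrix

/-!
Gram–Schmidt applied to the columns of a projection `P`, discarding the vectors that become zero,
yields an orthonormal basis of `range P`; applied to the columns of `1 - P` it yields one of
`ker P = (range P)ᗮ`. Listing the first basis before the second gives a unitary `V P` with
`(V P)ᴴ * P * V P = diag(1, …, 1, 0, …, 0)`, with `rank P` ones. Once the sets of discarded
indices are fixed, `V P` is built from `P` by finitely many measurable operations, and these sets
are constant on the pieces of a finite measurable partition, so `V` is measurable. The required
field is then `u ω = V (f ω) * (V (r k))ᴴ` with `k = rank (f ω)`, a measurable function of `ω`.
-/

open Finset Submodule Module InnerProductSpace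

section GramSchmidtSupport

variable {𝕜 E ι : Type*} [RCLike 𝕜] [NormedAddCommGroup E] [InnerProductSpace 𝕜 E]
  [LinearOrder ι] [LocallyFiniteOrderBot ι] [WellFoundedLT ι]

theorem gramSchmidtNormed_mem_span (f : ι → E) (i : ι) :
    gramSchmidtNormed 𝕜 f i ∈ span 𝕜 (Set.range f) := by
  rw [← span_gramSchmidt 𝕜 f, ← span_gramSchmidtNormed_range]
  exact subset_span ⟨i, rfl⟩

open Classical in
variable (𝕜) in
noncomputable def gramSchmidtSupport [Fintype ι] (f : ι → E) : Finset ι :=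
  {i | gramSchmidtNormed 𝕜 f i ≠ 0}

variable [Fintype ι]

theorem mem_gramSchmidtSupport {f : ι → E} {i : ι} :
    i ∈ gramSchmidtSupport 𝕜 f ↔ gramSchmidtNormed 𝕜 f i ≠ 0 := by
  simp [gramSchmidtSupport]

theorem orthonormal_gramSchmidtNormed_comp_orderEmbOfFin (f : ι → E) :
    Orthonormal 𝕜 (gramSchmidtNormed 𝕜 f ∘ (gramSchmidtSupport 𝕜 f).orderEmbOfFin rfl) :=
  (gramSchmidtNormed_orthonormal' f).comp
    (fun j => ⟨_, mem_gramSchmidtSupport.mp ((gramSchmidtSupport 𝕜 f).orderEmbOfFin_mem rfl j)⟩)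
    fun _ _ h => by simpa using h

theorem span_gramSchmidtNormed_gramSchmidtSupport (f : ι → E) :
    span 𝕜 (gramSchmidtNormed 𝕜 f '' gramSchmidtSupport 𝕜 f) = span 𝕜 (Set.range f) := by
  rw [← span_gramSchmidt 𝕜 f, ← span_gramSchmidtNormed_range]
  refine le_antisymm (span_mono (Set.image_subset_range _ _)) (span_le.mpr ?_)
  rintro _ ⟨i, rfl⟩
  by_cases hi : gramSchmidtNormed 𝕜 f i = 0
  · simp [hi]
  · exact subset_span ⟨i, mem_gramSchmidtSupport.mpr hi, rfl⟩

theorem card_gramSchmidtSupport (f : ι → E) :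
    #(gramSchmidtSupport 𝕜 f) = finrank 𝕜 (span 𝕜 (Set.range f)) := by
  have h := finrank_span_eq_card
    (orthonormal_gramSchmidtNormed_comp_orderEmbOfFin (𝕜 := 𝕜) f).linearIndependent
  rw [Set.range_comp, Finset.range_orderEmbOfFin,
    span_gramSchmidtNormed_gramSchmidtSupport] at h
  simpa using h.symm

end GramSchmidtSupport

section MeasurableGramSchmidt

variable {α 𝕜 E ι : Type*} [MeasurableSpace α] [RCLike 𝕜] [NormedAddCommGroup E]
  [InnerProductSpace 𝕜 E] [MeasurableSpace E] [BorelSpace E] [SecondCountableTopology E]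
  [LinearOrder ι] [LocallyFiniteOrderBot ι] [WellFoundedLT ι] {f : α → ι → E}

theorem measurable_gramSchmidt (hf : ∀ i, Measurable fun a => f a i) (i : ι) :
    Measurable fun a => gramSchmidt 𝕜 (f a) i := by
  induction i using WellFoundedLT.induction with
  | _ i ih =>
  have h : (fun a => gramSchmidt 𝕜 (f a) i) = fun a => f a i - ∑ j ∈ Iio i,
      (⟪gramSchmidt 𝕜 (f a) j, f a i⟫_𝕜 / (‖gramSchmidt 𝕜 (f a) j‖ : 𝕜) ^ 2) •
        gramSchmidt 𝕜 (f a) j :=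
    funext fun a => eq_sub_of_add_eq (gramSchmidt_def'' 𝕜 (f a) i).symm
  rw [h]
  refine (hf i).sub (Finset.measurable_sum _ fun j hj => ?_)
  have hj := ih j (mem_Iio.mp hj)
  exact ((hj.inner (hf i)).div ((RCLike.measurable_ofReal.comp hj.norm).pow_const 2)).smul hj

theorem measurable_gramSchmidtNormed (hf : ∀ i, Measurable fun a => f a i) (i : ι) :
    Measurable fun a => gramSchmidtNormed 𝕜 (f a) i :=
  (RCLike.measurable_ofReal.comp (measurable_gramSchmidt hf i).norm).inv.smul
    (measurable_gramSchmidt hf i)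

theorem measurableSet_gramSchmidtSupport_eq [Fintype ι] (hf : ∀ i, Measurable fun a => f a i)
    (s : Finset ι) : MeasurableSet {a | gramSchmidtSupport 𝕜 (f a) = s} := by
  have h : {a | gramSchmidtSupport 𝕜 (f a) = s} =
      ⋂ i, {a | gramSchmidtNormed 𝕜 (f a) i ≠ 0 ↔ i ∈ s} := by
    ext a
    simp [Finset.ext_iff, mem_gramSchmidtSupport]
  rw [h]
  exact .iInter fun i => measurableSet_setOfPred.mpr
    ((measurable_gramSchmidtNormed hf i (measurableSet_singleton 0)).compl.mem.iff
      measurable_const)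

end MeasurableGramSchmidt

theorem measurable_of_measurable_pieces {α β ι : Type*} [MeasurableSpace α] [MeasurableSpace β]
    [Countable ι] {π : α → ι} (hπ : ∀ i, MeasurableSet {a | π a = i}) {F : ι → α → β}
    (hF : ∀ i, Measurable (F i)) : Measurable fun a => F (π a) a := by
  intro S hS
  have h : (fun a => F (π a) a) ⁻¹' S = ⋃ i, {a | π a = i} ∩ F i ⁻¹' S := by
    ext a
    simp only [Set.mem_preimage, Set.mem_iUnion, Set.mem_inter_iff, Set.mem_ofPred_eq]
    exact ⟨fun h => ⟨π a, rfl, h⟩, by rintro ⟨i, rfl, h⟩; exact h⟩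
  rw [h]
  exact .iUnion fun i => (hπ i).inter (hF i hS)

theorem Orthonormal.sumElim {𝕜 E ι κ : Type*} [RCLike 𝕜] [NormedAddCommGroup E]
    [InnerProductSpace 𝕜 E] {u : ι → E} {v : κ → E} (hu : Orthonormal 𝕜 u)
    (hv : Orthonormal 𝕜 v) (huv : ∀ i j, ⟪u i, v j⟫_𝕜 = 0) : Orthonormal 𝕜 (Sum.elim u v) := by
  refine ⟨Sum.forall.mpr ⟨hu.1, hv.1⟩, ?_⟩
  rintro (i | i) (j | j) hij
  · exact hu.2 fun h => hij (congrArg _ h)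
  · exact huv i j
  · exact inner_eq_zero_symm.mp (huv j i)
  · exact hv.2 fun h => hij (congrArg _ h)

section ConcatFamily

variable {𝕜 E ι : Type*} [LinearOrder ι]

/-- `u` on `s` followed by `v` on `t`, each enumerated in increasing order. -/
noncomputable def concatFamily (s t : Finset ι) (u v : ι → E) : Fin (#s + #t) → E :=
  Sum.elim (u ∘ s.orderEmbOfFin rfl) (v ∘ t.orderEmbOfFin rfl) ∘ finSumFinEquiv.symm

@[simp]
theorem concatFamily_castAdd (s t : Finset ι) (u v : ι → E) (i : Fin #s) :
    concatFamily s t u v (Fin.castAdd #t i) = u (s.orderEmbOfFin rfl i) := by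
  simp [concatFamily]

@[simp]
theorem concatFamily_natAdd (s t : Finset ι) (u v : ι → E) (i : Fin #t) :
    concatFamily s t u v (Fin.natAdd #s i) = v (t.orderEmbOfFin rfl i) := by
  simp [concatFamily]

theorem Orthonormal.concatFamily [RCLike 𝕜] [NormedAddCommGroup E] [InnerProductSpace 𝕜 E]
    {s t : Finset ι} {u v : ι → E}
    (hu : Orthonormal 𝕜 (u ∘ s.orderEmbOfFin rfl)) (hv : Orthonormal 𝕜 (v ∘ t.orderEmbOfFin rfl))
    (huv : ∀ i ∈ s, ∀ j ∈ t, ⟪u i, v j⟫_𝕜 = 0) : Orthonormal 𝕜 (concatFamily s t u v) :=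
  (hu.sumElim hv fun i j => huv _ (s.orderEmbOfFin_mem rfl i) _ (t.orderEmbOfFin_mem rfl j)).comp
    _ finSumFinEquiv.symm.injective

end ConcatFamily

section ProjectionFrame

variable {𝕜 E ι : Type*} [RCLike 𝕜] [NormedAddCommGroup E] [InnerProductSpace 𝕜 E]
  [Fintype ι] [LinearOrder ι] [LocallyFiniteOrderBot ι] [WellFoundedLT ι]
  {T : E →ₗ[𝕜] E} {u v : ι → E}

theorem card_gramSchmidtSupport_add_card [FiniteDimensional 𝕜 E]
    (hu : span 𝕜 (Set.range u) = LinearMap.range T)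
    (hv : span 𝕜 (Set.range v) = LinearMap.ker T) :
    #(gramSchmidtSupport 𝕜 u) + #(gramSchmidtSupport 𝕜 v) = finrank 𝕜 E := by
  rw [card_gramSchmidtSupport, card_gramSchmidtSupport, hu, hv, T.finrank_range_add_finrank_ker]

theorem orthonormal_concatFamily_gramSchmidtNormed (hT : IsIdempotentElem T)
    (hTs : T.IsSymmetric) (hu : span 𝕜 (Set.range u) = LinearMap.range T)
    (hv : span 𝕜 (Set.range v) = LinearMap.ker T) :
    Orthonormal 𝕜 (concatFamily (gramSchmidtSupport 𝕜 u) (gramSchmidtSupport 𝕜 v)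
      (gramSchmidtNormed 𝕜 u) (gramSchmidtNormed 𝕜 v)) :=
  (orthonormal_gramSchmidtNormed_comp_orderEmbOfFin u).concatFamily
    (orthonormal_gramSchmidtNormed_comp_orderEmbOfFin v) fun i _ j _ =>
      isOrtho_iff_inner_eq.mp
        ((LinearMap.IsIdempotentElem.isSymmetric_iff_isOrtho_range_ker hT).mp hTs) _
        (hu ▸ gramSchmidtNormed_mem_span u i) _ (hv ▸ gramSchmidtNormed_mem_span v j)

theorem apply_concatFamily_gramSchmidtNormed (hT : IsIdempotentElem T)
    (hu : span 𝕜 (Set.range u) = LinearMap.range T)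
    (hv : span 𝕜 (Set.range v) = LinearMap.ker T)
    (j : Fin (#(gramSchmidtSupport 𝕜 u) + #(gramSchmidtSupport 𝕜 v))) :
    T (concatFamily _ _ (gramSchmidtNormed 𝕜 u) (gramSchmidtNormed 𝕜 v) j) =
      if (j : ℕ) < #(gramSchmidtSupport 𝕜 u) then
        concatFamily _ _ (gramSchmidtNormed 𝕜 u) (gramSchmidtNormed 𝕜 v) j
      else 0 := by
  induction j using Fin.addCases with
  | left i =>
    simpa using (LinearMap.IsIdempotentElem.mem_range_iff hT).mp
      (hu ▸ gramSchmidtNormed_mem_span u _)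
  | right i =>
    simpa using LinearMap.mem_ker.mp (hv ▸ gramSchmidtNormed_mem_span v _)

end ProjectionFrame

namespace Matrix

variable {𝕜 m n : Type*} [RCLike 𝕜]

def ofColumns (w : n → EuclideanSpace 𝕜 m) : Matrix m n 𝕜 :=
  of fun i j => w j i

def euclideanCol (A : Matrix m n 𝕜) (j : n) : EuclideanSpace 𝕜 m :=
  WithLp.toLp 2 (Aᵀ j)

section Square

variable [Fintype m] [DecidableEq m]

theorem conjTranspose_ofColumns_mul_mul_ofColumns_apply (w : n → EuclideanSpace 𝕜 m)
    (A : Matrix m m 𝕜) (i j : n) :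
    ((ofColumns w)ᴴ * A * ofColumns w) i j = ⟪w i, toEuclideanLin A (w j)⟫_𝕜 := by
  simp only [ofColumns, mul_apply, conjTranspose_apply, of_apply, toLpLin_apply,
    EuclideanSpace.inner_eq_star_dotProduct, dotProduct, mulVec, Finset.sum_mul, Pi.star_apply]
  rw [Finset.sum_comm]
  exact Finset.sum_congr rfl fun _ _ => Finset.sum_congr rfl fun _ _ => by ring

theorem conjTranspose_ofColumns_mul_ofColumns (w : n → EuclideanSpace 𝕜 m) :
    (ofColumns w)ᴴ * ofColumns w = gram 𝕜 w := by
  ext i j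
  simpa [toLpLin_one] using conjTranspose_ofColumns_mul_mul_ofColumns_apply w 1 i j

theorem ofColumns_mem_unitaryGroup {w : m → EuclideanSpace 𝕜 m} (hw : Orthonormal 𝕜 w) :
    ofColumns w ∈ unitaryGroup m 𝕜 := by
  rw [mem_unitaryGroup_iff', star_eq_conjTranspose, conjTranspose_ofColumns_mul_ofColumns,
    gram_eq_one_iff_orthonormal.mpr hw]

end Square

section Rank

variable [Fintype n] [DecidableEq n]

theorem span_range_euclideanCol (A : Matrix m n 𝕜) :
    span 𝕜 (Set.range A.euclideanCol) = LinearMap.range (toEuclideanLin A) := by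
  have h : A.euclideanCol = toEuclideanLin A ∘ EuclideanSpace.basisFun n 𝕜 := by
    ext j i
    simp [euclideanCol, toLpLin_apply]
  rw [h, Set.range_comp, ← Submodule.map_span, LinearMap.range_eq_map,
    ← OrthonormalBasis.coe_toBasis, Basis.span_eq]

theorem finrank_range_toEuclideanLin [Fintype m] (A : Matrix m n 𝕜) :
    finrank 𝕜 (LinearMap.range (toEuclideanLin A)) = A.rank :=
  (rank_eq_finrank_range_toLin A (EuclideanSpace.basisFun m 𝕜).toBasis
    (EuclideanSpace.basisFun n 𝕜).toBasis).symm

end Rank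

theorem card_gramSchmidtSupport_euclideanCol [Fintype m] {k : ℕ} (A : Matrix m (Fin k) 𝕜) :
    #(gramSchmidtSupport 𝕜 A.euclideanCol) = A.rank := by
  rw [card_gramSchmidtSupport, span_range_euclideanCol, finrank_range_toEuclideanLin]

end Matrix

theorem Unitary.star_mul_mul_eq_of_conj_eq {R : Type*} [Monoid R] [StarMul R] {u v p q d : R}
    (hv : v ∈ unitary R) (hp : star u * p * u = d) (hq : star v * q * v = d) :
    star (u * star v) * p * (u * star v) = q :=
  calc star (u * star v) * p * (u * star v) = v * (star u * p * u) * star v := by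
        simp only [star_mul, star_star, mul_assoc]
    _ = v * star v * q * (v * star v) := by rw [hp, ← hq]; simp only [mul_assoc]
    _ = q := by rw [Unitary.mul_star_self_of_mem hv, one_mul, mul_one]

section DiagonalizingUnitary

variable {𝕜 : Type*} [RCLike 𝕜] {n : ℕ}

def stdProjection (n k : ℕ) : Matrix (Fin n) (Fin n) 𝕜 :=
  diagonal fun j => if (j : ℕ) < k then 1 else 0

theorem conjTranspose_ofColumns_mul_mul_ofColumns_eq_stdProjection
    {A : Matrix (Fin n) (Fin n) 𝕜} {w : Fin n → EuclideanSpace 𝕜 (Fin n)} {k : ℕ}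
    (hw : Orthonormal 𝕜 w) (hA : ∀ j, toEuclideanLin A (w j) = if (j : ℕ) < k then w j else 0) :
    (ofColumns w)ᴴ * A * ofColumns w = stdProjection n k := by
  ext i j
  rw [conjTranspose_ofColumns_mul_mul_ofColumns_apply, hA, stdProjection, diagonal_apply]
  by_cases hij : i = j
  · subst hij
    by_cases hi : (i : ℕ) < k <;> simp [hi, hw.1]
  · by_cases hj : (j : ℕ) < k <;> simp [hij, hj, orthonormal_iff_ite.mp hw]

/-- The value `0` is junk: for a star projection `P` and the Gram–Schmidt supports `s`, `t` of
the columns of `P` and `1 - P`, always `#s + #t = n`. -/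
noncomputable def projectionFrame (s t : Finset (Fin n)) (P : Matrix (Fin n) (Fin n) 𝕜) :
    Matrix (Fin n) (Fin n) 𝕜 :=
  if h : #s + #t = n then
    ofColumns (concatFamily s t (gramSchmidtNormed 𝕜 P.euclideanCol)
      (gramSchmidtNormed 𝕜 (1 - P).euclideanCol) ∘ Fin.cast h.symm)
  else 0

/-- The supports are passed to `projectionFrame` as parameters since they are locally constant
on a finite measurable partition, on whose pieces `projectionFrame s t` is measurable. -/
noncomputable def diagonalizingUnitary (P : Matrix (Fin n) (Fin n) 𝕜) :
    Matrix (Fin n) (Fin n) 𝕜 :=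
  projectionFrame (gramSchmidtSupport 𝕜 P.euclideanCol)
    (gramSchmidtSupport 𝕜 (1 - P).euclideanCol) P

variable {P : Matrix (Fin n) (Fin n) 𝕜}

theorem IsStarProjection.exists_diagonalizingUnitary_eq_ofColumns (hP : IsStarProjection P) :
    ∃ w : Fin n → EuclideanSpace 𝕜 (Fin n), Orthonormal 𝕜 w ∧
      (∀ j, toEuclideanLin P (w j) = if (j : ℕ) < P.rank then w j else 0) ∧
      diagonalizingUnitary P = ofColumns w := by
  set T := toEuclideanLin P
  have hT : IsIdempotentElem T := hP.isIdempotentElem.map (toLpLinAlgEquiv 2)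
  have hTs : T.IsSymmetric := isSymmetric_toEuclideanLin_iff.mpr hP.isSelfAdjoint
  have hu : span 𝕜 (Set.range P.euclideanCol) = LinearMap.range T := span_range_euclideanCol P
  have hv : span 𝕜 (Set.range (1 - P).euclideanCol) = LinearMap.ker T := by
    rw [span_range_euclideanCol, map_sub, toLpLin_one,
      LinearMap.IsIdempotentElem.ker_eq_range hT]
  have hcard := card_gramSchmidtSupport_add_card hu hv
  rw [finrank_euclideanSpace_fin] at hcard
  refine ⟨_, (orthonormal_concatFamily_gramSchmidtNormed hT hTs hu hv).comp _
    (Fin.cast_injective hcard.symm), fun j => ?_, dif_pos hcard⟩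
  simpa [card_gramSchmidtSupport_euclideanCol] using
    apply_concatFamily_gramSchmidtNormed hT hu hv (Fin.cast hcard.symm j)

theorem IsStarProjection.diagonalizingUnitary_mem_unitaryGroup (hP : IsStarProjection P) :
    diagonalizingUnitary P ∈ unitaryGroup (Fin n) 𝕜 := by
  obtain ⟨w, hw, -, hV⟩ := hP.exists_diagonalizingUnitary_eq_ofColumns
  exact hV ▸ ofColumns_mem_unitaryGroup hw

theorem IsStarProjection.conjTranspose_diagonalizingUnitary_mul_mul (hP : IsStarProjection P) :
    (diagonalizingUnitary P)ᴴ * P * diagonalizingUnitary P = stdProjection n P.rank := by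
  obtain ⟨w, hw, hPw, hV⟩ := hP.exists_diagonalizingUnitary_eq_ofColumns
  exact hV ▸ conjTranspose_ofColumns_mul_mul_ofColumns_eq_stdProjection hw hPw

end DiagonalizingUnitary

instance Matrix.secondCountableTopology {m n α : Type*} [Countable m] [Countable n]
    [TopologicalSpace α] [SecondCountableTopology α] : SecondCountableTopology (Matrix m n α) :=
  inferInstanceAs (SecondCountableTopology (m → n → α))

section MeasurableDiagonalizingUnitary

variable {n : ℕ}

theorem measurable_euclideanCol (j : Fin n) :
    Measurable fun P : Matrix (Fin n) (Fin n) ℂ => P.euclideanCol j :=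
  (by fun_prop : Continuous fun P : Matrix (Fin n) (Fin n) ℂ => WithLp.toLp 2 (Pᵀ j)).measurable

theorem measurable_projectionFrame (s t : Finset (Fin n)) :
    Measurable (projectionFrame (𝕜 := ℂ) s t) := by
  have hframe : ∀ j, Measurable fun P : Matrix (Fin n) (Fin n) ℂ => concatFamily s t
      (gramSchmidtNormed ℂ P.euclideanCol) (gramSchmidtNormed ℂ (1 - P).euclideanCol) j := by
    intro j
    induction j using Fin.addCases with
    | left i => simpa using measurable_gramSchmidtNormed measurable_euclideanCol _
    | right i => simpa using measurable_gramSchmidtNormed (fun j =>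
        (measurable_euclideanCol j).comp (continuous_const.sub continuous_id).measurable) _
  have hofColumns : Continuous (ofColumns (𝕜 := ℂ) (m := Fin n) (n := Fin n)) := by
    unfold ofColumns
    fun_prop
  unfold projectionFrame
  split_ifs
  · exact hofColumns.measurable.comp (measurable_pi_lambda _ fun j => hframe _)
  · exact measurable_const

theorem measurableSet_gramSchmidtSupport_euclideanCol_eq (s : Finset (Fin n)) :
    MeasurableSet {P : Matrix (Fin n) (Fin n) ℂ | gramSchmidtSupport ℂ P.euclideanCol = s} :=
  measurableSet_gramSchmidtSupport_eq measurable_euclideanCol s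

theorem measurable_diagonalizingUnitary :
    Measurable (diagonalizingUnitary : Matrix (Fin n) (Fin n) ℂ → Matrix (Fin n) (Fin n) ℂ) := by
  refine measurable_of_measurable_pieces (π := fun P : Matrix (Fin n) (Fin n) ℂ =>
      (gramSchmidtSupport ℂ P.euclideanCol, gramSchmidtSupport ℂ (1 - P).euclideanCol))
    (F := fun st : Finset (Fin n) × Finset (Fin n) => projectionFrame st.1 st.2) (fun st => ?_)
    fun st => measurable_projectionFrame st.1 st.2
  have h : {P : Matrix (Fin n) (Fin n) ℂ | (gramSchmidtSupport ℂ P.euclideanCol,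
      gramSchmidtSupport ℂ (1 - P).euclideanCol) = st} =
      {P | gramSchmidtSupport ℂ P.euclideanCol = st.1} ∩
        (1 - ·) ⁻¹' {P | gramSchmidtSupport ℂ P.euclideanCol = st.2} := by
    ext P
    simp only [Prod.ext_iff, Set.mem_ofPred_eq, Set.mem_inter_iff, Set.mem_preimage]
  rw [h]
  exact (measurableSet_gramSchmidtSupport_euclideanCol_eq _).inter
    ((continuous_const.sub continuous_id).measurable
      (measurableSet_gramSchmidtSupport_euclideanCol_eq _))

theorem measurable_rank : Measurable (Matrix.rank : Matrix (Fin n) (Fin n) ℂ → ℕ) := by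
  have h : (Matrix.rank : Matrix (Fin n) (Fin n) ℂ → ℕ) =
      fun P => #(gramSchmidtSupport ℂ P.euclideanCol) :=
    funext fun P => (card_gramSchmidtSupport_euclideanCol P).symm
  rw [h]
  exact measurable_of_measurable_pieces (π := fun P : Matrix (Fin n) (Fin n) ℂ =>
      gramSchmidtSupport ℂ P.euclideanCol) (F := fun s _ => #s)
    measurableSet_gramSchmidtSupport_euclideanCol_eq fun _ => measurable_const

end MeasurableDiagonalizingUnitary

theorem measurable_field_of_projections_unitarily_trivialized_general
    (Ω : Type*) [MeasurableSpace Ω] (n : ℕ)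
    (f : Ω → Matrix (Fin n) (Fin n) ℂ) (hf : Measurable f)
    (hproj : ∀ ω, f ω * f ω = f ω ∧ (f ω)ᴴ = f ω)
    (r : ℕ → Matrix (Fin n) (Fin n) ℂ)
    (hr : ∀ k ≤ n, r k * r k = r k ∧ (r k)ᴴ = r k ∧ (r k).rank = k) :
    ∃ u : Ω → Matrix (Fin n) (Fin n) ℂ,
      Measurable u ∧
      ∀ ω : Ω, (u ω)ᴴ * u ω = 1 ∧ u ω * (u ω)ᴴ = 1 ∧
        (u ω)ᴴ * f ω * u ω = r ((f ω).rank) := by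
  refine ⟨fun ω => diagonalizingUnitary (f ω) * (diagonalizingUnitary (r (f ω).rank))ᴴ, ?_,
    fun ω => ?_⟩
  · have hV := measurable_diagonalizingUnitary (n := n)
    exact (hV.comp hf).mul (continuous_id.matrix_conjTranspose.measurable.comp
      (hV.comp (measurable_from_nat.comp (measurable_rank.comp hf))))
  · obtain ⟨hr2, hrh, hrk⟩ := hr _ (rank_le_width (f ω))
    have hP : IsStarProjection (f ω) := ⟨(hproj ω).1, (hproj ω).2⟩
    have hQ : IsStarProjection (r (f ω).rank) := ⟨hr2, hrh⟩
    have hu := mul_mem hP.diagonalizingUnitary_mem_unitaryGroup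
      (Unitary.star_mem hQ.diagonalizingUnitary_mem_unitaryGroup)
    have hQconj := hQ.conjTranspose_diagonalizingUnitary_mul_mul
    rw [hrk] at hQconj
    exact ⟨mem_unitaryGroup_iff'.mp hu, mem_unitaryGroup_iff.mp hu,
      Unitary.star_mul_mul_eq_of_conj_eq hQ.diagonalizingUnitary_mem_unitaryGroup
        hP.conjTranspose_diagonalizingUnitary_mul_mul hQconj⟩

/-- Every measurable field of projections `f : Ω → M_n(ℂ)` is measurably unitarily
equivalent to a field taking values in a fixed finite set `{0 = r₀, r₁, …, r_{n-1}, rₙ = 1}`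
of projections, where `r_k` has rank `k`. -/
theorem measurable_field_of_projections_unitarily_trivialized
    (Ω : Type*) [MeasurableSpace Ω] (n : ℕ)
    (f : Ω → Matrix (Fin n) (Fin n) ℂ) (hf : Measurable f)
    (hproj : ∀ ω, f ω * f ω = f ω ∧ (f ω)ᴴ = f ω)
    (r : ℕ → Matrix (Fin n) (Fin n) ℂ)
    (hr : ∀ k ≤ n, r k * r k = r k ∧ (r k)ᴴ = r k ∧ (r k).rank = k)
    (hr0 : r 0 = 0) (hrn : r n = 1) :
    ∃ u : Ω → Matrix (Fin n) (Fin n) ℂ,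
      Measurable u ∧
      ∀ ω : Ω, (u ω)ᴴ * u ω = 1 ∧ u ω * (u ω)ᴴ = 1 ∧
        (u ω)ᴴ * f ω * u ω = r ((f ω).rank) :=
  measurable_field_of_projections_unitarily_trivialized_general Ω n f hf hproj r hr
end
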